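/- arXiv:1507.08466 — 3 statements merged into one kernel-verified Lean document; each statement's English description precedes it below -/
import Mathlib

section
/- Let H ∈ (0,1), t ∈ ℝ, r > 0, and define h : ℝ → ℝ by h(u) = (u−t+r)_+^{1/2−H} + (u−t−r)_+^{1/2−H} − 2(u−t)_+^{1/2−H}. Then for every s ∈ ℝ with |s − t| ≥ r, the function u ↦ (s−u)_+^{H−1/2} h(u) is Lebesgue integrable on ℝ and ∫_ℝ (s−u)_+^{H−1/2} h(u) du = 0. -/
open MeasureTheory

/-- `pospow x a = x^a` for `x > 0` and `0` for `x ≤ 0` (with `x_+^0 = 1` for `x > 0`). -/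
noncomputable def pospow (x a : ℝ) : ℝ := if 0 < x then x ^ a else 0

lemma pospow_of_pos {x : ℝ} (hx : 0 < x) (a : ℝ) : pospow x a = x ^ a := if_pos hx

lemma pospow_of_nonpos {x : ℝ} (hx : x ≤ 0) (a : ℝ) : pospow x a = 0 := if_neg (not_lt.2 hx)

lemma measurable_pospow (a : ℝ) : Measurable fun x : ℝ => pospow x a := by
  unfold pospow
  exact Measurable.ite (measurableSet_lt measurable_const measurable_id)
    (by fun_prop) measurable_const

lemma pospow_mul {k : ℝ} (hk : 0 < k) (x a : ℝ) :
    pospow (k * x) a = k ^ a * pospow x a := by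
  rcases lt_or_ge 0 x with hx | hx
  · rw [pospow_of_pos hx, pospow_of_pos (mul_pos hk hx), Real.mul_rpow hk.le hx.le]
  · rw [pospow_of_nonpos hx, pospow_of_nonpos (by nlinarith : k * x ≤ 0), mul_zero]

/-- The model Beta-type integrand. -/
noncomputable def Gfun (a : ℝ) : ℝ → ℝ := fun v => pospow (1 - v) a * pospow v (-a)

lemma Gfun_integrable {a : ℝ} (ha : a ∈ Set.Ioo (-1:ℝ) 1) : Integrable (Gfun a) := by
  obtain ⟨ha1, ha2⟩ := ha
  have hmeas : Measurable (Gfun a) :=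
    ((measurable_pospow a).comp (measurable_const.sub measurable_id)).mul
      (measurable_pospow (-a))
  have h1 : IntegrableOn (Gfun a) (Set.Ioc 0 (1/2)) := by
    have hbound : Integrable (fun v : ℝ => ((1/2:ℝ) ^ a + 1) * v ^ (-a))
        (volume.restrict (Set.Ioc 0 (1/2))) := by
      have hii : IntervalIntegrable (fun v : ℝ => ((1/2:ℝ) ^ a + 1) * v ^ (-a))
          volume 0 (1/2) :=
        (intervalIntegral.intervalIntegrable_rpow' (by linarith)).const_mul _
      exact (intervalIntegrable_iff_integrableOn_Ioc_of_le (by norm_num)).1 hii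
    refine Integrable.mono' hbound hmeas.aestronglyMeasurable.restrict ?_
    rw [ae_restrict_iff' measurableSet_Ioc]
    refine ae_of_all _ fun v hv => ?_
    obtain ⟨hv0, hv2⟩ := hv
    have hv1 : 0 < 1 - v := by linarith
    have hG : Gfun a v = (1 - v) ^ a * v ^ (-a) := by
      rw [Gfun, pospow_of_pos hv1, pospow_of_pos hv0]
    have hnn : 0 ≤ (1 - v) ^ a * v ^ (-a) :=
      mul_nonneg (Real.rpow_nonneg hv1.le _) (Real.rpow_nonneg hv0.le _)
    rw [Real.norm_eq_abs, hG, abs_of_nonneg hnn]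
    have hb : (1 - v) ^ a ≤ (1/2:ℝ) ^ a + 1 := by
      rcases le_or_gt 0 a with hha | hha
      · have := Real.rpow_le_one (x := 1 - v) (by linarith) (by linarith) hha
        have h0 : (0:ℝ) ≤ (1/2:ℝ) ^ a := Real.rpow_nonneg (by norm_num) _
        linarith
      · have := Real.rpow_le_rpow_of_nonpos (by norm_num : (0:ℝ) < 1/2)
          (by linarith : (1/2:ℝ) ≤ 1 - v) hha.le
        linarith
    exact mul_le_mul_of_nonneg_right hb (Real.rpow_nonneg hv0.le _)
  have h2 : IntegrableOn (Gfun a) (Set.Ioo (1/2) 1) := by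
    have hbound : Integrable (fun v : ℝ => ((1/2:ℝ) ^ (-a) + 1) * (1 - v) ^ a)
        (volume.restrict (Set.Ioo (1/2) 1)) := by
      have h' := ((intervalIntegral.intervalIntegrable_rpow' (a := 0) (b := 1/2)
        (r := a) (by linarith)).comp_sub_left 1).symm
      have hio : IntegrableOn (fun v : ℝ => (1 - v) ^ a) (Set.Ioc (1 - 1/2) (1 - 0)) volume :=
        (intervalIntegrable_iff_integrableOn_Ioc_of_le (by norm_num)).1 h'
      have hio2 : IntegrableOn (fun v : ℝ => (1 - v) ^ a) (Set.Ioo (1/2) 1) volume :=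
        hio.mono_set (fun v hv => ⟨by linarith [hv.1], by linarith [hv.2]⟩)
      exact hio2.const_mul _
    refine Integrable.mono' hbound hmeas.aestronglyMeasurable.restrict ?_
    rw [ae_restrict_iff' measurableSet_Ioo]
    refine ae_of_all _ fun v hv => ?_
    obtain ⟨hv0, hv2⟩ := hv
    have hvpos : (0:ℝ) < v := by linarith
    have hv1 : 0 < 1 - v := by linarith
    have hG : Gfun a v = (1 - v) ^ a * v ^ (-a) := by
      rw [Gfun, pospow_of_pos hv1, pospow_of_pos hvpos]
    have hnn : 0 ≤ (1 - v) ^ a * v ^ (-a) :=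
      mul_nonneg (Real.rpow_nonneg hv1.le _) (Real.rpow_nonneg hvpos.le _)
    rw [Real.norm_eq_abs, hG, abs_of_nonneg hnn]
    have hb : v ^ (-a) ≤ (1/2:ℝ) ^ (-a) + 1 := by
      rcases le_or_gt 0 (-a) with hha | hha
      · have := Real.rpow_le_one (x := v) (by linarith) (by linarith) hha
        have h0 : (0:ℝ) ≤ (1/2:ℝ) ^ (-a) := Real.rpow_nonneg (by norm_num) _
        linarith
      · have := Real.rpow_le_rpow_of_nonpos (by norm_num : (0:ℝ) < 1/2)
          (by linarith : (1/2:ℝ) ≤ v) hha.le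
        linarith
    calc (1 - v) ^ a * v ^ (-a) = v ^ (-a) * (1 - v) ^ a := by ring
      _ ≤ ((1/2:ℝ) ^ (-a) + 1) * (1 - v) ^ a :=
        mul_le_mul_of_nonneg_right hb (Real.rpow_nonneg hv1.le _)
  have key : IntegrableOn (Gfun a) (Set.Ioo 0 1) := by
    refine (h1.union h2).mono_set fun v hv => ?_
    obtain ⟨hv0, hv1⟩ := hv
    rcases le_or_gt v (1/2) with hle | hlt
    · exact Or.inl ⟨hv0, hle⟩
    · exact Or.inr ⟨hlt, hv1⟩
  have hsupp : ∀ v ∉ Set.Ioo (0:ℝ) 1, Gfun a v = 0 := by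
    intro v hv
    rw [Set.mem_Ioo, not_and_or] at hv
    rcases hv with hv | hv
    · rw [Gfun, pospow_of_nonpos (not_lt.1 hv) (-a), mul_zero]
    · rw [Gfun, pospow_of_nonpos (by push_neg at hv; linarith : (1:ℝ) - v ≤ 0) a, zero_mul]
  have hind : Set.indicator (Set.Ioo 0 1) (Gfun a) = Gfun a :=
    Set.indicator_eq_self.2 (Function.support_subset_iff'.2 hsupp)
  rw [← hind]
  exact key.integrable_indicator measurableSet_Ioo

lemma key_int {a : ℝ} (ha : a ∈ Set.Ioo (-1:ℝ) 1) {c s : ℝ} (hcs : c ≤ s) :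
    Integrable (fun u : ℝ => pospow (s - u) a * pospow (u - c) (-a)) ∧
    (∫ u : ℝ, pospow (s - u) a * pospow (u - c) (-a)) = (s - c) * ∫ v : ℝ, Gfun a v := by
  rcases eq_or_lt_of_le hcs with rfl | hlt
  · have hzero : (fun u : ℝ => pospow (c - u) a * pospow (u - c) (-a)) = fun _ => 0 := by
      funext u
      rcases le_or_gt (c - u) 0 with h1 | h1
      · rw [pospow_of_nonpos h1, zero_mul]
      · rw [pospow_of_nonpos (by linarith : u - c ≤ 0), mul_zero]
    rw [hzero]
    exact ⟨integrable_zero _ _ _, by simp⟩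
  · set L := s - c with hL
    have hLpos : (0:ℝ) < L := sub_pos.2 hlt
    have hinv : L⁻¹ * L = 1 := inv_mul_cancel₀ hLpos.ne'
    have hFeq : (fun u : ℝ => pospow (s - u) a * pospow (u - c) (-a))
        = fun u => Gfun a (L⁻¹ * u + -(L⁻¹ * c)) := by
      funext u
      have e1 : 1 - (L⁻¹ * u + -(L⁻¹ * c)) = L⁻¹ * (s - u) := by
        rw [← hinv, hL]; ring
      have e2 : L⁻¹ * u + -(L⁻¹ * c) = L⁻¹ * (u - c) := by ring
      rw [Gfun, e1, e2, pospow_mul (inv_pos.2 hLpos), pospow_mul (inv_pos.2 hLpos)]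
      have e3 : (L⁻¹) ^ a * (L⁻¹) ^ (-a) = 1 := by
        rw [← Real.rpow_add (inv_pos.2 hLpos), add_neg_cancel, Real.rpow_zero]
      calc pospow (s - u) a * pospow (u - c) (-a)
          = ((L⁻¹) ^ a * (L⁻¹) ^ (-a)) * (pospow (s - u) a * pospow (u - c) (-a)) := by
            rw [e3, one_mul]
        _ = (L⁻¹) ^ a * pospow (s - u) a * ((L⁻¹) ^ (-a) * pospow (u - c) (-a)) := by ring
    have hG := Gfun_integrable ha
    have hint : Integrable fun u : ℝ => Gfun a (L⁻¹ * u + -(L⁻¹ * c)) :=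
      (hG.comp_add_right (-(L⁻¹ * c))).comp_mul_left' (inv_ne_zero hLpos.ne')
    have hI : (∫ u : ℝ, Gfun a (L⁻¹ * u + -(L⁻¹ * c))) = L * ∫ v : ℝ, Gfun a v := by
      rw [Measure.integral_comp_mul_left (fun w => Gfun a (w + -(L⁻¹ * c))) L⁻¹,
        integral_add_right_eq_self (fun w => Gfun a w) (-(L⁻¹ * c)),
        inv_inv, abs_of_pos hLpos, smul_eq_mul]
    rw [hFeq]
    exact ⟨hint, hI⟩

theorem statement_5 (H : ℝ) (hH : H ∈ Set.Ioo (0:ℝ) 1) (t r : ℝ) (hr : 0 < r)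
    (h : ℝ → ℝ)
    (hdef : ∀ u, h u = pospow (u - t + r) (1/2 - H) + pospow (u - t - r) (1/2 - H)
      - 2 * pospow (u - t) (1/2 - H))
    (s : ℝ) (hs : r ≤ |s - t|) :
    Integrable (fun u : ℝ => pospow (s - u) (H - 1/2) * h u) ∧
    (∫ u : ℝ, pospow (s - u) (H - 1/2) * h u) = 0 := by
  obtain ⟨hH0, hH1⟩ := hH
  rcases le_abs.1 hs with h1 | h1
  · -- case t + r ≤ s
    have ha : (H - 1/2) ∈ Set.Ioo (-1:ℝ) 1 := ⟨by linarith, by linarith⟩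
    have heq : (fun u : ℝ => pospow (s - u) (H - 1/2) * h u)
        = fun u => pospow (s - u) (H - 1/2) * pospow (u - (t - r)) (-(H - 1/2))
          + pospow (s - u) (H - 1/2) * pospow (u - (t + r)) (-(H - 1/2))
          - 2 * (pospow (s - u) (H - 1/2) * pospow (u - t) (-(H - 1/2))) := by
      funext u
      rw [hdef u, show (1/2 - H : ℝ) = -(H - 1/2) by ring,
        show u - t + r = u - (t - r) by ring, show u - t - r = u - (t + r) by ring]
      ring
    have k1 := key_int ha (show t - r ≤ s by linarith)
    have k2 := key_int ha (show t + r ≤ s by linarith)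
    have k3 := key_int ha (show t ≤ s by linarith)
    have hadd : Integrable (fun u : ℝ =>
        pospow (s - u) (H - 1/2) * pospow (u - (t - r)) (-(H - 1/2))
        + pospow (s - u) (H - 1/2) * pospow (u - (t + r)) (-(H - 1/2))) := k1.1.add k2.1
    have hmul : Integrable (fun u : ℝ =>
        2 * (pospow (s - u) (H - 1/2) * pospow (u - t) (-(H - 1/2)))) := k3.1.const_mul 2
    rw [heq]
    refine ⟨hadd.sub hmul, ?_⟩
    rw [integral_sub hadd hmul, integral_add k1.1 k2.1,
      integral_const_mul, k1.2, k2.2, k3.2]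
    ring
  · -- case s ≤ t - r : the integrand vanishes identically
    have hst : s ≤ t - r := by linarith
    have hzero : (fun u : ℝ => pospow (s - u) (H - 1/2) * h u) = fun _ => 0 := by
      funext u
      rcases le_or_gt (s - u) 0 with h2 | h2
      · rw [pospow_of_nonpos h2, zero_mul]
      · rw [hdef u, pospow_of_nonpos (by linarith : u - t + r ≤ 0),
          pospow_of_nonpos (by linarith : u - t - r ≤ 0),
          pospow_of_nonpos (by linarith : u - t ≤ 0)]
        ring
    rw [hzero]
    exact ⟨integrable_zero _ _ _, by simp⟩
end

section
/- Let H ∈ (0,1), t ∈ ℝ, r > 0, and define h : ℝ → ℝ by h(u) = (u−t+r)_+^{1/2−H} + (u−t−r)_+^{1/2−H} − 2(u−t)_+^{1/2−H}. Then the function u ↦ (t−u)_+^{H−1/2} h(u) is Lebesgue integrable on ℝ and ∫_ℝ (t−u)_+^{H−1/2} h(u) du = r · ∫_0^1 v^{H−1/2} (1−v)^{1/2−H} dv > 0. -/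
open MeasureTheory

private lemma rpow_le_four {x c : ℝ} (hx : 1/4 ≤ x) (hx1 : x ≤ 1) (hc : -1 ≤ c) :
    x ^ c ≤ 4 := by
  rcases le_or_gt 0 c with hc0 | hc0
  · exact (Real.rpow_le_one (by linarith) hx1 hc0).trans (by norm_num)
  · calc x ^ c ≤ (1/4 : ℝ) ^ c :=
        Real.rpow_le_rpow_of_nonpos (by norm_num) hx hc0.le
    _ = 4 ^ (-c) := by
        rw [one_div, Real.inv_rpow (by norm_num), ← Real.rpow_neg (by norm_num)]
    _ ≤ 4 ^ (1:ℝ) := Real.rpow_le_rpow_of_exponent_le (by norm_num) (by linarith)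
    _ = 4 := Real.rpow_one 4

private lemma betaInt {a b : ℝ} (ha : -1 < a) (hb : -1 < b) :
    IntegrableOn (fun v : ℝ => v ^ a * (1 - v) ^ b) (Set.Ioo 0 1) := by
  have h1 : IntegrableOn (fun v : ℝ => v ^ a * (1 - v) ^ b) (Set.Ioo 0 (3/4)) := by
    refine Integrable.mono'
      (((intervalIntegral.integrableOn_Ioo_rpow_iff (by norm_num)).2 ha).const_mul 4)
      ((ContinuousOn.mul
        (continuousOn_id.rpow_const fun x hx => Or.inl (ne_of_gt hx.1))
        ((continuousOn_const.sub continuousOn_id).rpow_const fun x hx =>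
          Or.inl (by simp only [Pi.sub_apply, id]; intro hc; rw [sub_eq_zero] at hc; linarith [hx.2]))).aestronglyMeasurable
        measurableSet_Ioo) ?_
    refine (ae_restrict_iff' measurableSet_Ioo).2 (Filter.Eventually.of_forall fun v hv => ?_)
    obtain ⟨hv0, hv34⟩ := hv
    have h1v : (1:ℝ)/4 ≤ 1 - v := by linarith
    have h1v1 : 1 - v ≤ 1 := by linarith
    have hnn : 0 ≤ v ^ a := Real.rpow_nonneg hv0.le a
    have hnn2 : 0 ≤ (1 - v) ^ b := Real.rpow_nonneg (by linarith) b
    rw [Real.norm_eq_abs, abs_of_nonneg (mul_nonneg hnn hnn2), mul_comm (4:ℝ)]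
    exact mul_le_mul_of_nonneg_left (rpow_le_four h1v h1v1 hb.le) hnn
  have h2 : IntegrableOn (fun v : ℝ => v ^ a * (1 - v) ^ b) (Set.Ioo (1/4) 1) := by
    have hb1 : IntervalIntegrable (fun x : ℝ => x ^ b) volume 0 (3/4) :=
      intervalIntegral.intervalIntegrable_rpow' hb
    have hb2 : IntervalIntegrable (fun x : ℝ => (1 - x) ^ b) volume (1 - 0) (1 - 3/4) :=
      hb1.comp_sub_left 1
    have hb3 : IntegrableOn (fun x : ℝ => (1 - x) ^ b) (Set.Ioo (1/4) 1) := by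
      have h4 := hb2.symm
      rw [show (1:ℝ) - 3/4 = 1/4 by norm_num, show (1:ℝ) - 0 = 1 by norm_num] at h4
      exact ((intervalIntegrable_iff_integrableOn_Ioc_of_le (by norm_num)).1 h4).mono_set
        Set.Ioo_subset_Ioc_self
    refine Integrable.mono' (hb3.const_mul 4)
      ((ContinuousOn.mul
        (continuousOn_id.rpow_const fun x hx => Or.inl (ne_of_gt (by linarith [hx.1] : (0:ℝ) < x)))
        ((continuousOn_const.sub continuousOn_id).rpow_const fun x hx =>
          Or.inl (by simp only [Pi.sub_apply, id]; intro hc; rw [sub_eq_zero] at hc; linarith [hx.2]))).aestronglyMeasurable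
        measurableSet_Ioo) ?_
    refine (ae_restrict_iff' measurableSet_Ioo).2 (Filter.Eventually.of_forall fun v hv => ?_)
    obtain ⟨hv14, hv1⟩ := hv
    have hnn : 0 ≤ v ^ a := Real.rpow_nonneg (by linarith) a
    have hnn2 : 0 ≤ (1 - v) ^ b := Real.rpow_nonneg (by linarith) b
    rw [Real.norm_eq_abs, abs_of_nonneg (mul_nonneg hnn hnn2)]
    exact mul_le_mul_of_nonneg_right (rpow_le_four hv14.le (by linarith) ha.le) hnn2
  refine (h1.union h2).mono_set fun v hv => ?_
  rcases le_or_gt v (1/4) with h | h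
  · exact Or.inl ⟨hv.1, by linarith [hv.2]⟩
  · exact Or.inr ⟨h, hv.2⟩

theorem statement_8 (H : ℝ) (hH : H ∈ Set.Ioo (0:ℝ) 1) (t r : ℝ) (hr : 0 < r)
    (h : ℝ → ℝ)
    (hdef : ∀ u, h u = pospow (u - t + r) (1/2 - H) + pospow (u - t - r) (1/2 - H)
      - 2 * pospow (u - t) (1/2 - H)) :
    Integrable (fun u : ℝ => pospow (t - u) (H - 1/2) * h u) ∧
    (∫ u : ℝ, pospow (t - u) (H - 1/2) * h u)
      = r * ∫ v in Set.Ioo (0:ℝ) 1, v ^ (H - 1/2) * (1 - v) ^ (1/2 - H) ∧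
    0 < (∫ u : ℝ, pospow (t - u) (H - 1/2) * h u) := by
  obtain ⟨hH0, hH1⟩ := hH
  have ha : (-1:ℝ) < H - 1/2 := by linarith
  have hb : (-1:ℝ) < 1/2 - H := by linarith
  have hInt : IntegrableOn (fun v : ℝ => v ^ (H - 1/2) * (1 - v) ^ (1/2 - H))
      (Set.Ioo 0 1) := betaInt ha hb
  set f : ℝ → ℝ := fun v => v ^ (H - 1/2) * (1 - v) ^ (1/2 - H) with hf_def
  set F : ℝ → ℝ := Set.indicator (Set.Ioo 0 1) f with hF_def
  have hFint : Integrable F := (integrable_indicator_iff measurableSet_Ioo).2 hInt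
  have key : ∀ u, pospow (t - u) (H - 1/2) * h u = F ((u - t) / (-r)) := by
    intro u
    rw [hdef u]
    have hrw : (u - t) / (-r) = (t - u) / r := by
      rw [div_neg, ← neg_div, neg_sub]
    unfold pospow
    by_cases h1 : 0 < t - u
    · have hut : ¬ 0 < u - t := by linarith
      have hutr : ¬ 0 < u - t - r := by linarith
      rw [if_pos h1, if_neg hut, if_neg hutr]
      by_cases h2 : 0 < u - t + r
      · have hmem : (u - t) / (-r) ∈ Set.Ioo (0:ℝ) 1 := by
          rw [hrw]
          exact ⟨div_pos h1 hr, (div_lt_one hr).2 (by linarith)⟩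
        rw [if_pos h2, hF_def, Set.indicator_of_mem hmem, hrw]
        simp only [hf_def]
        have h1mv : 1 - (t - u) / r = (u - t + r) / r := by
          field_simp
          ring
        rw [h1mv, Real.div_rpow h1.le hr.le, Real.div_rpow h2.le hr.le,
          div_mul_div_comm, ← Real.rpow_add hr]
        rw [show H - 1/2 + (1/2 - H) = 0 by ring, Real.rpow_zero, div_one]
        ring
      · have hnmem : (u - t) / (-r) ∉ Set.Ioo (0:ℝ) 1 := by
          rw [hrw]
          intro hmem
          have := (div_lt_one hr).1 hmem.2
          linarith
        rw [if_neg h2, hF_def, Set.indicator_of_notMem hnmem]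
        ring
    · have hnmem : (u - t) / (-r) ∉ Set.Ioo (0:ℝ) 1 := by
        rw [hrw]
        intro hmem
        have := hmem.1
        have h1' : t - u ≤ 0 := by linarith [not_lt.1 h1]
        have : (t - u) / r ≤ 0 := div_nonpos_of_nonpos_of_nonneg h1' hr.le
        linarith
      rw [if_neg h1, hF_def, Set.indicator_of_notMem hnmem]
      ring
  have hGint : Integrable (fun v : ℝ => F (v / (-r))) :=
    hFint.comp_div (neg_ne_zero.2 hr.ne')
  have hgint : Integrable (fun u : ℝ => pospow (t - u) (H - 1/2) * h u) :=
    (hGint.comp_sub_right t).congr (Filter.Eventually.of_forall fun u => (key u).symm)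
  have hpos : 0 < ∫ v in Set.Ioo (0:ℝ) 1, f v := by
    have hnn : 0 ≤ᵐ[volume.restrict (Set.Ioo (0:ℝ) 1)] f := by
      refine (ae_restrict_iff' measurableSet_Ioo).2 (Filter.Eventually.of_forall fun v hv => ?_)
      exact mul_nonneg (Real.rpow_nonneg hv.1.le _) (Real.rpow_nonneg (by linarith [hv.2]) _)
    refine (setIntegral_pos_iff_support_of_nonneg_ae hnn hInt).2 ?_
    have hsub : Set.Ioo (0:ℝ) 1 ⊆ Function.support f ∩ Set.Ioo 0 1 := by
      intro v hv
      refine ⟨?_, hv⟩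
      exact (mul_pos (Real.rpow_pos_of_pos hv.1 _)
        (Real.rpow_pos_of_pos (by linarith [hv.2]) _)).ne'
    calc (0:ENNReal) < volume (Set.Ioo (0:ℝ) 1) := by simp [Real.volume_Ioo]
    _ ≤ volume (Function.support f ∩ Set.Ioo 0 1) := measure_mono hsub
  have hval : (∫ u : ℝ, pospow (t - u) (H - 1/2) * h u)
      = r * ∫ v in Set.Ioo (0:ℝ) 1, f v := by
    calc (∫ u : ℝ, pospow (t - u) (H - 1/2) * h u)
        = ∫ u : ℝ, F ((u - t) / (-r)) := by
          exact integral_congr_ae (Filter.Eventually.of_forall key)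
    _ = ∫ v : ℝ, F (v / (-r)) := integral_sub_right_eq_self (fun v => F (v / (-r))) t
    _ = |(-r)| • ∫ v : ℝ, F v := Measure.integral_comp_div F (-r)
    _ = r * ∫ v in Set.Ioo (0:ℝ) 1, f v := by
        rw [abs_neg, abs_of_pos hr, hF_def, integral_indicator measurableSet_Ioo,
          smul_eq_mul]
  exact ⟨hgint, hval, by rw [hval]; exact mul_pos hr hpos⟩
end

section
/- Let N ≥ 1, H = (H₁,…,H_N) ∈ (0,1)^N, and let ρ be the anisotropic metric ρ(s,t) = Σ_{ℓ=1}^N |s_ℓ − t_ℓ|^{H_ℓ} on ℝ^N. Let γ > 0 and let μ be a Borel probability measure on [0,1]^N such that μ(S) ≤ c₁ (diam_ρ S)^γ for some constant c₁ and every Borel set S ⊆ [0,1]^N, where diam_ρ S is the diameter of S in the metric ρ. Then for every η with 0 < η < γ, the double integral ∬ ρ(x,y)^{−η} ( 1 + log⁺(ρ(x,y)^{−1}) )^N μ(dx) μ(dy) is finite, where log⁺ x = max(log x, 0). -/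
open MeasureTheory
open scoped ENNReal NNReal

/-- The anisotropic metric `ρ(s,t) = ∑ℓ |sℓ - tℓ|^{Hℓ}`. -/
noncomputable def rhoDist {N : ℕ} (H : Fin N → ℝ) (s t : Fin N → ℝ) : ℝ :=
  ∑ ℓ, |s ℓ - t ℓ| ^ (H ℓ)

/-- The diameter of a set with respect to the anisotropic metric `ρ`. -/
noncomputable def rhoDiam {N : ℕ} (H : Fin N → ℝ) (S : Set (Fin N → ℝ)) : ℝ :=
  sSup {r : ℝ | ∃ x ∈ S, ∃ y ∈ S, r = rhoDist H x y}

lemma rhoDist_nonneg {N : ℕ} (H : Fin N → ℝ) (x y : Fin N → ℝ) : 0 ≤ rhoDist H x y :=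
  Finset.sum_nonneg fun _ _ => Real.rpow_nonneg (abs_nonneg _) _

lemma rhoDist_symm {N : ℕ} (H : Fin N → ℝ) (x y : Fin N → ℝ) :
    rhoDist H x y = rhoDist H y x := by
  unfold rhoDist; simp_rw [abs_sub_comm]

lemma rhoDist_eq_zero {N : ℕ} (H : Fin N → ℝ) (hH : ∀ ℓ, H ℓ ∈ Set.Ioo (0:ℝ) 1)
    {x y : Fin N → ℝ} (h : rhoDist H x y = 0) : y = x := by
  have h2 := (Finset.sum_eq_zero_iff_of_nonneg
    (fun ℓ _ => Real.rpow_nonneg (abs_nonneg (x ℓ - y ℓ)) _)).mp h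
  funext ℓ
  have h3 := h2 ℓ (Finset.mem_univ ℓ)
  rw [Real.rpow_eq_zero (abs_nonneg _) (hH ℓ).1.ne'] at h3
  have := abs_eq_zero.mp h3
  linarith [sub_eq_zero.mp this]

lemma rhoDist_self {N : ℕ} (H : Fin N → ℝ) (hH : ∀ ℓ, H ℓ ∈ Set.Ioo (0:ℝ) 1)
    (x : Fin N → ℝ) : rhoDist H x x = 0 :=
  Finset.sum_eq_zero fun ℓ _ => by
    rw [sub_self, abs_zero, Real.zero_rpow (hH ℓ).1.ne']

lemma rhoDist_triangle {N : ℕ} (H : Fin N → ℝ) (hH : ∀ ℓ, H ℓ ∈ Set.Ioo (0:ℝ) 1)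
    (x y z : Fin N → ℝ) : rhoDist H x z ≤ rhoDist H x y + rhoDist H y z := by
  unfold rhoDist
  rw [← Finset.sum_add_distrib]
  refine Finset.sum_le_sum fun ℓ _ => ?_
  set a := |x ℓ - y ℓ| with ha
  set b := |y ℓ - z ℓ| with hb
  have ha0 : 0 ≤ a := abs_nonneg _
  have hb0 : 0 ≤ b := abs_nonneg _
  calc |x ℓ - z ℓ| ^ H ℓ ≤ (a + b) ^ H ℓ := by
        apply Real.rpow_le_rpow (abs_nonneg _) ?_ (hH ℓ).1.le
        rw [ha, hb]
        exact abs_sub_le _ _ _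
    _ ≤ a ^ H ℓ + b ^ H ℓ := by
        have h := NNReal.rpow_add_le_add_rpow a.toNNReal b.toNNReal (hH ℓ).1.le (hH ℓ).2.le
        have h2 := NNReal.coe_le_coe.mpr h
        push_cast [NNReal.coe_rpow] at h2
        rwa [Real.coe_toNNReal _ ha0, Real.coe_toNNReal _ hb0] at h2

lemma rhoDiam_nonneg {N : ℕ} (H : Fin N → ℝ) (S : Set (Fin N → ℝ)) : 0 ≤ rhoDiam H S := by
  apply Real.sSup_nonneg
  rintro r ⟨a, _, b, _, rfl⟩
  exact rhoDist_nonneg H a b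

lemma rhoDiam_le_ball {N : ℕ} (H : Fin N → ℝ) (hH : ∀ ℓ, H ℓ ∈ Set.Ioo (0:ℝ) 1)
    (x₀ : Fin N → ℝ) (r : ℝ) (hr : 0 ≤ r) (S : Set (Fin N → ℝ))
    (hS : ∀ y ∈ S, rhoDist H x₀ y ≤ r) : rhoDiam H S ≤ 2 * r := by
  apply Real.sSup_le _ (by positivity)
  rintro _ ⟨a, ha, b, hb, rfl⟩
  calc rhoDist H a b ≤ rhoDist H a x₀ + rhoDist H x₀ b := rhoDist_triangle H hH a x₀ b
    _ ≤ r + r := add_le_add (by rw [rhoDist_symm]; exact hS a ha) (hS b hb)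
    _ = 2 * r := by ring

lemma exists_dyadic {g : ℝ} (h0 : 0 < g) (h1 : g < 1) :
    ∃ k : ℕ, (2⁻¹:ℝ)^(k+1) ≤ g ∧ g < (2⁻¹:ℝ)^k := by
  have hex : ∃ n : ℕ, (2⁻¹:ℝ)^(n+1) ≤ g := by
    obtain ⟨n, hn⟩ := exists_pow_lt_of_lt_one h0 (by norm_num : (2⁻¹:ℝ) < 1)
    refine ⟨n, le_trans ?_ hn.le⟩
    exact pow_le_pow_of_le_one (by norm_num) (by norm_num) (Nat.le_succ n)
  classical
  refine ⟨Nat.find hex, Nat.find_spec hex, ?_⟩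
  rcases Nat.eq_zero_or_pos (Nat.find hex) with h | h
  · rw [h]; simpa using h1
  · have hm := Nat.find_min hex (Nat.sub_lt h one_pos)
    rw [show Nat.find hex - 1 + 1 = Nat.find hex from Nat.succ_pred_eq_of_pos h] at hm
    exact not_le.mp hm

lemma aux_summable (N : ℕ) (r : ℝ) (h0 : 0 < r) (h1 : r < 1) :
    Summable (fun k : ℕ => ((k:ℝ)+2)^N * r ^ k) := by
  have h := summable_pow_mul_geometric_of_norm_lt_one (R := ℝ) (r := r) N
    (by rwa [Real.norm_eq_abs, abs_of_pos h0])
  have h2 := (summable_nat_add_iff 2).mpr h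
  have h3 := h2.mul_left (r⁻¹ ^ 2)
  refine h3.congr fun k => ?_
  have hr : r ≠ 0 := h0.ne'
  push_cast
  field_simp
  ring

/-- Coefficient sequence for the dyadic annuli. -/
noncomputable def aSeq (c₁ γ η : ℝ) (N : ℕ) (k : ℕ) : ℝ :=
  (|c₁| * (2:ℝ)^γ * (2:ℝ)^η) * (((k:ℝ)+2)^N * ((2:ℝ)^(η-γ)) ^ k)

lemma aEq (c₁ γ η : ℝ) (N k : ℕ) :
    ((2:ℝ)^(k+1))^η * ((k:ℝ)+2)^N * (|c₁| * (2 * (2⁻¹:ℝ)^k)^γ)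
      = aSeq c₁ γ η N k := by
  have e1 : ((2:ℝ)^(k+1))^η = (2:ℝ)^(((k:ℝ)+1)*η) := by
    rw [← Real.rpow_natCast 2 (k+1), ← Real.rpow_mul (by norm_num)]
    all_goals (congr 1; push_cast; ring)
  have einv : (2⁻¹:ℝ)^k = (2:ℝ)^(-(k:ℝ)) := by
    rw [Real.rpow_neg (by norm_num), Real.rpow_natCast, inv_pow]
  have e2 : (2 * (2⁻¹:ℝ)^k)^γ = (2:ℝ)^((1-(k:ℝ))*γ) := by
    have hm : (2:ℝ) * (2:ℝ)^(-(k:ℝ)) = (2:ℝ)^(1 - (k:ℝ)) := by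
      rw [show (1:ℝ) - (k:ℝ) = 1 + -(k:ℝ) from by ring, Real.rpow_add (by norm_num),
        Real.rpow_one]
    rw [einv, hm, ← Real.rpow_mul (by norm_num)]
  have e3 : ((2:ℝ)^(η-γ))^k = (2:ℝ)^((η-γ)*(k:ℝ)) := by
    rw [← Real.rpow_natCast ((2:ℝ)^(η-γ)) k, ← Real.rpow_mul (by norm_num)]
  have key2 : (2:ℝ)^(((k:ℝ)+1)*η) * (2:ℝ)^((1-(k:ℝ))*γ)
      = (2:ℝ)^γ * (2:ℝ)^η * (2:ℝ)^((η-γ)*(k:ℝ)) := by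
    rw [← Real.rpow_add (by norm_num), ← Real.rpow_add (by norm_num),
      ← Real.rpow_add (by norm_num)]
    congr 1; ring
  unfold aSeq
  rw [e1, e2, e3]
  linear_combination (((k:ℝ)+2)^N * |c₁|) * key2

lemma aSeq_nonneg (c₁ γ η : ℝ) (N : ℕ) (k : ℕ) : 0 ≤ aSeq c₁ γ η N k := by
  unfold aSeq
  positivity

lemma aSeq_summable (c₁ γ η : ℝ) (N : ℕ) (hηγ : η < γ) : Summable (aSeq c₁ γ η N) := by
  have h0 : (0:ℝ) < (2:ℝ)^(η-γ) := Real.rpow_pos_of_pos two_pos _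
  have h1 : (2:ℝ)^(η-γ) < 1 := Real.rpow_lt_one_of_one_lt_of_neg one_lt_two (by linarith)
  exact (aux_summable N _ h0 h1).mul_left _

lemma inner_bound (N : ℕ) (H : Fin N → ℝ)
    (hH : ∀ ℓ, H ℓ ∈ Set.Ioo (0:ℝ) 1)
    (γ : ℝ) (hγ : 0 < γ) (μ : Measure (Fin N → ℝ)) [IsProbabilityMeasure μ]
    (hsupp : μ (Set.Icc (0 : Fin N → ℝ) 1)ᶜ = 0) (c₁ : ℝ)
    (hfrost : ∀ S : Set (Fin N → ℝ), MeasurableSet S → S ⊆ Set.Icc 0 1 →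
      μ S ≤ ENNReal.ofReal (c₁ * rhoDiam H S ^ γ))
    (η : ℝ) (hη : 0 < η) (hηγ : η < γ) (x : Fin N → ℝ) :
    (∫⁻ y, (ENNReal.ofReal (rhoDist H x y)) ^ (-η)
        * (1 + ENNReal.ofReal (max (Real.log (rhoDist H x y)⁻¹) 0)) ^ (N : ℕ) ∂μ)
      ≤ 1 + ENNReal.ofReal (∑' k : ℕ, aSeq c₁ γ η N k) := by
  classical
  set Q : Set (Fin N → ℝ) := Set.Icc 0 1 with hQdef
  set g : (Fin N → ℝ) → ℝ := fun y => rhoDist H x y with hgdef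
  set F : (Fin N → ℝ) → ℝ≥0∞ := fun y =>
    (ENNReal.ofReal (g y)) ^ (-η)
      * (1 + ENNReal.ofReal (max (Real.log (g y)⁻¹) 0)) ^ (N : ℕ) with hFdef
  have hgnn : ∀ y, 0 ≤ g y := fun y => rhoDist_nonneg H x y
  have hgmeas : Measurable g := by
    have : Continuous g := by
      rw [hgdef]; unfold rhoDist
      exact continuous_finset_sum _ fun ℓ _ =>
        ((continuous_const.sub (continuous_apply ℓ)).abs).rpow_const
          (fun y => Or.inr (hH ℓ).1.le)
    exact this.measurable
  set A : ℕ → Set (Fin N → ℝ) :=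
    fun k => Q ∩ g ⁻¹' Set.Ico ((2⁻¹:ℝ)^(k+1)) ((2⁻¹:ℝ)^k) with hAdef
  have hAmeas : ∀ k, MeasurableSet (A k) :=
    fun k => measurableSet_Icc.inter (hgmeas measurableSet_Ico)
  have hAsub : ∀ k, A k ⊆ Q := fun k => Set.inter_subset_left
  -- covering
  have hcover : (Set.univ : Set (Fin N → ℝ))
      ⊆ Qᶜ ∪ ((Q ∩ {x}) ∪ ({y | 1 ≤ g y} ∪ ⋃ k, A k)) := by
    intro y _
    by_cases hyQ : y ∈ Q
    · by_cases h0 : g y = 0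
      · exact Or.inr (Or.inl ⟨hyQ, rhoDist_eq_zero H hH h0⟩)
      · by_cases h1 : 1 ≤ g y
        · exact Or.inr (Or.inr (Or.inl h1))
        · obtain ⟨k, hk1, hk2⟩ :=
            exists_dyadic ((hgnn y).lt_of_ne (Ne.symm h0)) (not_le.mp h1)
          exact Or.inr (Or.inr (Or.inr (Set.mem_iUnion.mpr ⟨k, hyQ, hk1, hk2⟩)))
    · exact Or.inl hyQ
  -- piece 1 : complement of the cube
  have hzero1 : ∫⁻ y in Qᶜ, F y ∂μ = 0 := setLIntegral_measure_zero _ _ hsupp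
  -- piece 2 : the singleton
  have hQx : μ (Q ∩ {x}) = 0 := by
    have hd : rhoDiam H (Q ∩ {x}) = 0 := by
      refine le_antisymm ?_ (rhoDiam_nonneg H _)
      refine Real.sSup_le ?_ le_rfl
      rintro r ⟨a, ⟨_, ha⟩, b, ⟨_, hb⟩, rfl⟩
      rw [Set.mem_singleton_iff] at ha hb
      rw [ha, hb, rhoDist_self H hH]
    have h := hfrost (Q ∩ {x}) (measurableSet_Icc.inter (measurableSet_singleton x))
      Set.inter_subset_left
    rw [hd, Real.zero_rpow hγ.ne', mul_zero, ENNReal.ofReal_zero] at h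
    exact le_antisymm h zero_le
  have hzero2 : ∫⁻ y in Q ∩ {x}, F y ∂μ = 0 := setLIntegral_measure_zero _ _ hQx
  -- piece 3 : the far region
  have hone : ∫⁻ y in {y | 1 ≤ g y}, F y ∂μ ≤ 1 := by
    have hF1 : ∀ y ∈ {y | 1 ≤ g y}, F y ≤ 1 := by
      intro y hy
      have hy1 : 1 ≤ g y := hy
      have e1 : (ENNReal.ofReal (g y)) ^ (-η) ≤ 1 := by
        rw [ENNReal.rpow_neg, ENNReal.inv_le_one]
        calc (1:ℝ≥0∞) = 1 ^ η := (ENNReal.one_rpow η).symm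
          _ ≤ ENNReal.ofReal (g y) ^ η :=
              ENNReal.rpow_le_rpow (ENNReal.one_le_ofReal.mpr hy1) hη.le
      have e2 : max (Real.log (g y)⁻¹) 0 = 0 := by
        apply max_eq_right
        rw [Real.log_inv]
        exact neg_nonpos.mpr (Real.log_nonneg hy1)
      rw [hFdef]
      simp only [e2, ENNReal.ofReal_zero, add_zero, one_pow, mul_one]
      exact e1
    calc ∫⁻ y in {y | 1 ≤ g y}, F y ∂μ ≤ ∫⁻ _ in {y | 1 ≤ g y}, 1 ∂μ :=
          setLIntegral_mono measurable_const hF1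
      _ = μ {y | 1 ≤ g y} := by rw [setLIntegral_const, one_mul]
      _ ≤ 1 := prob_le_one
  -- pieces 4 : the annuli
  have hAk : ∀ k, ∫⁻ y in A k, F y ∂μ ≤ ENNReal.ofReal (aSeq c₁ γ η N k) := by
    intro k
    have hu : (0:ℝ) < (2⁻¹:ℝ)^(k+1) := by positivity
    have hFb : ∀ y ∈ A k,
        F y ≤ ENNReal.ofReal (((2:ℝ)^(k+1))^η * ((k:ℝ)+2)^N) := by
      rintro y ⟨-, hk1, hk2⟩
      have hgy : 0 < g y := lt_of_lt_of_le hu hk1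
      have e1 : (ENNReal.ofReal (g y)) ^ (-η)
          ≤ ENNReal.ofReal (((2:ℝ)^(k+1))^η) := by
        rw [ENNReal.rpow_neg]
        have h1 : ENNReal.ofReal ((2⁻¹:ℝ)^(k+1)) ^ η ≤ ENNReal.ofReal (g y) ^ η :=
          ENNReal.rpow_le_rpow (ENNReal.ofReal_le_ofReal hk1) hη.le
        refine le_trans (ENNReal.inv_le_inv' h1) (le_of_eq ?_)
        rw [ENNReal.ofReal_rpow_of_pos hu,
          ← ENNReal.ofReal_inv_of_pos (Real.rpow_pos_of_pos hu η),
          ← Real.inv_rpow hu.le]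
        congr 2
        rw [← inv_pow, inv_inv]
      have e2 : (1 + ENNReal.ofReal (max (Real.log (g y)⁻¹) 0)) ^ (N:ℕ)
          ≤ ENNReal.ofReal (((k:ℝ)+2)^N) := by
        have hlog : Real.log (g y)⁻¹ ≤ (k:ℝ)+1 := by
          rw [Real.log_inv]
          have h2 : Real.log ((2⁻¹:ℝ)^(k+1)) = -(((k:ℕ)+1:ℝ) * Real.log 2) := by
            rw [Real.log_pow, Real.log_inv]; push_cast; ring
          have h3 : Real.log 2 ≤ 1 := by
            linarith [Real.log_le_sub_one_of_pos (by norm_num : (0:ℝ) < 2)]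
          calc -Real.log (g y) ≤ -Real.log ((2⁻¹:ℝ)^(k+1)) :=
                neg_le_neg (Real.log_le_log hu hk1)
            _ = ((k:ℕ)+1:ℝ) * Real.log 2 := by rw [h2, neg_neg]
            _ ≤ ((k:ℕ)+1:ℝ) * 1 :=
                mul_le_mul_of_nonneg_left h3 (by positivity)
            _ = (k:ℝ)+1 := by push_cast; ring
        have hmax : max (Real.log (g y)⁻¹) 0 ≤ (k:ℝ)+1 := max_le hlog (by positivity)
        calc (1 + ENNReal.ofReal (max (Real.log (g y)⁻¹) 0)) ^ (N:ℕ)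
            ≤ (1 + ENNReal.ofReal ((k:ℝ)+1)) ^ (N:ℕ) := by gcongr
          _ = (ENNReal.ofReal ((k:ℝ)+2)) ^ (N:ℕ) := by
              rw [← ENNReal.ofReal_one, ← ENNReal.ofReal_add (by norm_num) (by positivity),
                show (1:ℝ) + ((k:ℝ)+1) = (k:ℝ)+2 by ring]
          _ = ENNReal.ofReal (((k:ℝ)+2)^N) := by
              rw [← ENNReal.ofReal_pow (by positivity)]
      calc F y ≤ ENNReal.ofReal (((2:ℝ)^(k+1))^η) * ENNReal.ofReal (((k:ℝ)+2)^N) :=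
            mul_le_mul' e1 e2
        _ = ENNReal.ofReal (((2:ℝ)^(k+1))^η * ((k:ℝ)+2)^N) := by
            rw [← ENNReal.ofReal_mul (by positivity)]
    have hdiam : rhoDiam H (A k) ≤ 2 * (2⁻¹:ℝ)^k :=
      rhoDiam_le_ball H hH x _ (by positivity) _ (fun y hy => hy.2.2.le)
    have hμA : μ (A k) ≤ ENNReal.ofReal (|c₁| * (2 * (2⁻¹:ℝ)^k)^γ) := by
      refine le_trans (hfrost (A k) (hAmeas k) (hAsub k)) (ENNReal.ofReal_le_ofReal ?_)
      have hd0 : 0 ≤ rhoDiam H (A k) := rhoDiam_nonneg H _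
      calc c₁ * rhoDiam H (A k) ^ γ ≤ |c₁| * rhoDiam H (A k) ^ γ :=
            mul_le_mul_of_nonneg_right (le_abs_self c₁) (Real.rpow_nonneg hd0 γ)
        _ ≤ |c₁| * (2 * (2⁻¹:ℝ)^k)^γ :=
            mul_le_mul_of_nonneg_left (Real.rpow_le_rpow hd0 hdiam hγ.le) (abs_nonneg c₁)
    calc ∫⁻ y in A k, F y ∂μ
        ≤ ∫⁻ _ in A k, ENNReal.ofReal (((2:ℝ)^(k+1))^η * ((k:ℝ)+2)^N) ∂μ :=
          setLIntegral_mono measurable_const hFb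
      _ = ENNReal.ofReal (((2:ℝ)^(k+1))^η * ((k:ℝ)+2)^N) * μ (A k) :=
          setLIntegral_const _ _
      _ ≤ ENNReal.ofReal (((2:ℝ)^(k+1))^η * ((k:ℝ)+2)^N)
            * ENNReal.ofReal (|c₁| * (2 * (2⁻¹:ℝ)^k)^γ) := mul_le_mul_right hμA _
      _ = ENNReal.ofReal (aSeq c₁ γ η N k) := by
          rw [← ENNReal.ofReal_mul (by positivity)]
          exact congrArg ENNReal.ofReal (aEq c₁ γ η N k)
  -- assemble
  have big : (∫⁻ y, F y ∂μ)
      ≤ 0 + (0 + (1 + ∑' k, ENNReal.ofReal (aSeq c₁ γ η N k))) := by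
    rw [← setLIntegral_univ]
    refine le_trans (lintegral_mono_set hcover) ?_
    refine le_trans (lintegral_union_le _ _ _) ?_
    refine add_le_add hzero1.le ?_
    refine le_trans (lintegral_union_le _ _ _) ?_
    refine add_le_add hzero2.le ?_
    refine le_trans (lintegral_union_le _ _ _) ?_
    refine add_le_add hone ?_
    refine le_trans (lintegral_iUnion_le _ _) ?_
    exact ENNReal.tsum_le_tsum hAk
  rw [zero_add, zero_add] at big
  refine le_trans big ?_
  rw [ENNReal.ofReal_tsum_of_nonneg (aSeq_nonneg c₁ γ η N) (aSeq_summable c₁ γ η N hηγ)]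

theorem statement_16 (N : ℕ) (hN : 1 ≤ N) (H : Fin N → ℝ)
    (hH : ∀ ℓ, H ℓ ∈ Set.Ioo (0:ℝ) 1)
    (γ : ℝ) (hγ : 0 < γ) (μ : Measure (Fin N → ℝ)) [IsProbabilityMeasure μ]
    (hsupp : μ (Set.Icc (0 : Fin N → ℝ) 1)ᶜ = 0) (c₁ : ℝ)
    (hfrost : ∀ S : Set (Fin N → ℝ), MeasurableSet S → S ⊆ Set.Icc 0 1 →
      μ S ≤ ENNReal.ofReal (c₁ * rhoDiam H S ^ γ))
    (η : ℝ) (hη : 0 < η) (hηγ : η < γ) :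
    (∫⁻ x, ∫⁻ y,
        (ENNReal.ofReal (rhoDist H x y)) ^ (-η)
          * (1 + ENNReal.ofReal (max (Real.log (rhoDist H x y)⁻¹) 0)) ^ (N : ℕ)
        ∂μ ∂μ) < ⊤ := by
  calc (∫⁻ x, ∫⁻ y,
        (ENNReal.ofReal (rhoDist H x y)) ^ (-η)
          * (1 + ENNReal.ofReal (max (Real.log (rhoDist H x y)⁻¹) 0)) ^ (N : ℕ)
        ∂μ ∂μ)
      ≤ ∫⁻ _, (1 + ENNReal.ofReal (∑' k : ℕ, aSeq c₁ γ η N k)) ∂μ :=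
        lintegral_mono fun x => inner_bound N H hH γ hγ μ hsupp c₁ hfrost η hη hηγ x
    _ = 1 + ENNReal.ofReal (∑' k : ℕ, aSeq c₁ γ η N k) := by
        rw [lintegral_const, measure_univ, mul_one]
    _ < ⊤ := ENNReal.add_lt_top.mpr ⟨ENNReal.one_lt_top, ENNReal.ofReal_lt_top⟩
end
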